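/- Let $L$ be the line bundle over the groupoid of germs $\G$ whose fiber over $[s,x]$ is the quotient of $\{(a,s',x): [s',x]=[s,x],\ a\in\A_{s'}\}$ by the equivalence relation $\sim$. For $\gamma=[s,x]\in\G$ and $a\in\A_s$ with $(a^*a)(x)>0$, every element of the fiber $L_\gamma$ is a unique scalar multiple of $[a,s,x]$; explicitly, for $b\in\A_s$, $[b,s,x]=\lambda\cdot[a,s,x]$ with $\lambda=(a^*b)(x)/(a^*a)(x)$. Hence $L_\gamma$ is one-dimensional, and $\lambda\mapsto\lambda[a,s,x]/\sqrt{(a^*a)(x)}$ is an isometric isomorphism $\mathbb{C}\to L_\gamma$. -/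

import Mathlib

/-!
Since the fibres over idempotents are commutative, for `a, b ∈ 𝒜ₛ` the element
`T = (a*b)(b*a) - (a*a)(b*b)` is self-adjoint and annihilates `a*b` and `a*a`, so `T² = 0` and
the C*-identity gives `(a*a)(b*b) = (a*b)(b*a)`. Evaluated at `x` this is equality in
Cauchy–Schwarz for the form `⟨c, d⟩ = (c*d)(x)` on `𝒜ₛ`: once `⟨a, a⟩ ≠ 0`, a vector `c` is null
iff `⟨a, c⟩ = 0`. Hence a witness `w` of `[b,t,x] ∼ [λa,s,x]` amounts to
`⟨a, bw⟩ = λ ⟨a, a⟩ w(x)`, which pins down `λ`; for `b ∈ 𝒜ₛ` it reads `⟨a, b⟩ = λ ⟨a, a⟩`,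
whence `⟨b, b⟩ = |λ|² ⟨a, a⟩`.
-/

/-- An inverse semigroup: a semigroup with an involution `star` such that `s (star s) s = s`,
`(star s) s (star s) = star s`, and idempotents commute (this forces `star s` to be the
unique generalized inverse of `s`). -/
class InverseSemigroup (S : Type*) extends Semigroup S, Star S where
  mul_star_mul : ∀ s : S, s * star s * s = s
  star_mul_star : ∀ s : S, star s * s * star s = star s
  idem_comm : ∀ e f : S, e * e = e → f * f = f → e * f = f * e

/-- The natural partial order on an inverse semigroup: `s ≤ t` iff `s = t (star s) s`. -/
def ISle {S : Type*} [InverseSemigroup S] (s t : S) : Prop := t * (star s * s) = s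

/-- A (concrete) Fell bundle over an inverse semigroup `S`: a family of closed subspaces
`fib s` of a C*-algebra `A`, with `fib s * fib t ⊆ fib (s t)`, `(fib s)* ⊆ fib (star s)`,
and `fib s ⊆ fib t` whenever `s ≤ t`.  (The fibers are thus Banach spaces with a
bilinear associative multiplication `𝒜ₛ × 𝒜ₜ → 𝒜ₛₜ`, a conjugate-linear involution
`𝒜ₛ → 𝒜ₛ*`, isometric inclusions, and the C*-identities hold in `A`.) -/
structure FellBundle (S : Type*) [InverseSemigroup S] (A : Type*)
    [NormedRing A] [StarRing A] [NormedAlgebra ℂ A] where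
  fib : S → Submodule ℂ A
  isClosed_fib : ∀ s, IsClosed (fib s : Set A)
  mul_mem : ∀ {s t : S} {a b : A}, a ∈ fib s → b ∈ fib t → a * b ∈ fib (s * t)
  star_mem : ∀ {s : S} {a : A}, a ∈ fib s → star a ∈ fib (star s)
  incl : ∀ {s t : S}, ISle s t → fib s ≤ fib t

variable {S : Type*} [InverseSemigroup S]
variable {A : Type*} [NormedRing A] [StarRing A] [CStarRing A]
  [NormedAlgebra ℂ A] [StarModule ℂ A] [CompleteSpace A]

/-- A Fell bundle is semi-abelian if each fiber over an idempotent is commutative. -/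
def FellBundle.SemiAbelian (𝓑 : FellBundle S A) : Prop :=
  ∀ e : S, e * e = e → ∀ a b : A, a ∈ 𝓑.fib e → b ∈ 𝓑.fib e → a * b = b * a

/-- A Fell bundle is saturated if `fib (s t)` is the closed linear span of
`fib s * fib t`. -/
def FellBundle.Saturated (𝓑 : FellBundle S A) : Prop :=
  ∀ s t : S, (𝓑.fib (s * t) : Set A) ⊆
    closure (↑(Submodule.span ℂ {x : A | ∃ a ∈ 𝓑.fib s, ∃ b ∈ 𝓑.fib t, x = a * b}) : Set A)

/-- The "restriction to the idempotent semilattice" part of the bundle: the closed linear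
span of the fibers over idempotents, a concrete model for `C*(𝓔)`. -/
def FellBundle.EPart (𝓑 : FellBundle S A) : Set A :=
  closure (↑(Submodule.span ℂ (⋃ e ∈ {e : S | e * e = e}, (𝓑.fib e : Set A))) : Set A)

/-- The open support `𝒰ₑ ⊆ X` of the ideal `𝒜ₑ = C₀(𝒰ₑ)`, expressed via the Gelfand
transform `val` of the idempotent part. -/
def FellBundle.U (𝓑 : FellBundle S A) {X : Type*} (val : A → X → ℂ) (e : S) : Set X :=
  {x : X | ∃ b ∈ 𝓑.fib e, val b x ≠ 0}

/-- The equivalence relation of Definition 3.9 on triples `(a, s, x)`: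
`(a,s,x) ∼ (a',s',x')` iff `x = x'` and there are an idempotent `e` and `b ∈ 𝒜ₑ` with
`b(x) ≠ 0`, `s e = s' e` and `a b ≡ₓ a' b`.  Its classes are the elements of the Fell
line bundle `L` over the groupoid of germs `𝒢`. -/
def germRelTrip {S : Type*} [InverseSemigroup S] {A : Type*} [NormedRing A] [StarRing A]
    [NormedAlgebra ℂ A] (𝓑 : FellBundle S A) {X : Type*} (val : A → X → ℂ) :
    (A × S × X) → (A × S × X) → Prop :=
  fun p q => p.2.2 = q.2.2 ∧ ∃ (e : S) (b : A), e * e = e ∧ b ∈ 𝓑.fib e ∧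
    val b p.2.2 ≠ 0 ∧ p.2.1 * e = q.2.1 * e ∧
    val (star (p.1 * b - q.1 * b) * (p.1 * b - q.1 * b)) p.2.2 = 0

namespace InverseSemigroup

theorem isIdempotentElem_mul_of_mul_mul_eq {x y : S} (h : y * x * y = y) :
    IsIdempotentElem (y * x) := by
  rw [IsIdempotentElem, ← mul_assoc, h]

theorem isIdempotentElem_mul_of_mul_mul_eq' {x y : S} (h : y * x * y = y) :
    IsIdempotentElem (x * y) := by
  rw [IsIdempotentElem, mul_assoc, ← mul_assoc y, h]

theorem commute_of_isIdempotentElem {e f : S} (he : IsIdempotentElem e)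
    (hf : IsIdempotentElem f) : Commute e f :=
  idem_comm e f he hf

theorem isIdempotentElem_star_mul_self (s : S) : IsIdempotentElem (star s * s) :=
  isIdempotentElem_mul_of_mul_mul_eq (star_mul_star s)

theorem isIdempotentElem_mul_self_star (s : S) : IsIdempotentElem (s * star s) :=
  isIdempotentElem_mul_of_mul_mul_eq' (star_mul_star s)

theorem isIdempotentElem_mul {e f : S} (he : IsIdempotentElem e) (hf : IsIdempotentElem f) :
    IsIdempotentElem (e * f) :=
  he.mul_of_commute (commute_of_isIdempotentElem he hf) hf

theorem eq_of_isGenInverse {x y z : S} (hxy : x * y * x = x) (hyx : y * x * y = y)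
    (hxz : x * z * x = x) (hzx : z * x * z = z) : y = z := by
  have hy : y = z * x * y :=
    calc y = y * (x * z * x) * y := by rw [hxz, hyx]
      _ = (y * x) * (z * x) * y := by simp only [mul_assoc]
      _ = (z * x) * (y * x) * y := by
        rw [commute_of_isIdempotentElem (isIdempotentElem_mul_of_mul_mul_eq hyx)
          (isIdempotentElem_mul_of_mul_mul_eq hzx)]
      _ = z * x * (y * x * y) := by simp only [mul_assoc]
      _ = z * x * y := by rw [hyx]
  have hz : z = z * x * y :=
    calc z = z * (x * y * x) * z := by rw [hxy, hzx]
      _ = z * ((x * y) * (x * z)) := by simp only [mul_assoc]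
      _ = z * ((x * z) * (x * y)) := by
        rw [commute_of_isIdempotentElem (isIdempotentElem_mul_of_mul_mul_eq' hyx)
          (isIdempotentElem_mul_of_mul_mul_eq' hzx)]
      _ = (z * x * z) * x * y := by simp only [mul_assoc]
      _ = z * x * y := by rw [hzx]
  exact hy.trans hz.symm

theorem star_eq_self_of_isIdempotentElem {e : S} (he : IsIdempotentElem e) : star e = e :=
  eq_of_isGenInverse (mul_star_mul e) (star_mul_star e) (by rw [he, he]) (by rw [he, he])

theorem star_mul (s t : S) : star (s * t) = star t * star s := by
  have hcomm := commute_of_isIdempotentElem (isIdempotentElem_mul_self_star t)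
    (isIdempotentElem_star_mul_self s)
  refine eq_of_isGenInverse (mul_star_mul (s * t)) (star_mul_star (s * t)) ?_ ?_
  · calc s * t * (star t * star s) * (s * t)
        = s * ((t * star t) * (star s * s)) * t := by simp only [mul_assoc]
      _ = (s * star s * s) * (t * star t * t) := by rw [hcomm.eq]; simp only [mul_assoc]
      _ = s * t := by rw [mul_star_mul, mul_star_mul]
  · calc star t * star s * (s * t) * (star t * star s)
        = star t * ((star s * s) * (t * star t)) * star s := by simp only [mul_assoc]
      _ = (star t * t * star t) * (star s * s * star s) := by
        rw [← hcomm.eq]; simp only [mul_assoc]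
      _ = star t * star s := by rw [star_mul_star, star_mul_star]

theorem isle_mul_right (s : S) {e : S} (he : IsIdempotentElem e) : ISle (s * e) s := by
  rw [ISle, star_mul, star_eq_self_of_isIdempotentElem he]
  calc s * (e * star s * (s * e)) = s * ((star s * s) * e * e) := by
        rw [(commute_of_isIdempotentElem he (isIdempotentElem_star_mul_self s)).eq.symm]
        simp only [mul_assoc]
    _ = s * e := by rw [mul_assoc _ e e, he.eq, ← mul_assoc, ← mul_assoc, mul_star_mul]

end InverseSemigroup

namespace FellBundle

open ComplexConjugate

variable {E : Type*} [NormedRing E] [StarRing E] [NormedAlgebra ℂ E]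

theorem mul_mem_of_mul_eq (𝓑 : FellBundle S E) {s t e : S} {b w : E} (he : IsIdempotentElem e)
    (hb : b ∈ 𝓑.fib t) (hw : w ∈ 𝓑.fib e) (hte : t * e = s * e) : b * w ∈ 𝓑.fib s :=
  𝓑.incl (InverseSemigroup.isle_mul_right s he) (hte ▸ 𝓑.mul_mem hb hw)

theorem star_mul_mem (𝓑 : FellBundle S E) {s : S} {c d : E} (hc : c ∈ 𝓑.fib s)
    (hd : d ∈ 𝓑.fib s) : star c * d ∈ 𝓑.fib (star s * s) :=
  𝓑.mul_mem (𝓑.star_mem hc) hd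

theorem mul_star_mem (𝓑 : FellBundle S E) {s : S} {c d : E} (hc : c ∈ 𝓑.fib s)
    (hd : d ∈ 𝓑.fib s) : c * star d ∈ 𝓑.fib (s * star s) :=
  𝓑.mul_mem hc (𝓑.star_mem hd)

/-- `val` plays the role of the Gelfand transform of the commutative algebra `C*(𝓔)`. -/
structure IsIdempotentStarHom (𝓑 : FellBundle S E) {X : Type*} (val : E → X → ℂ) : Prop where
  map_add : ∀ {e : S} {a b : E}, IsIdempotentElem e → a ∈ 𝓑.fib e → b ∈ 𝓑.fib e →
    ∀ x, val (a + b) x = val a x + val b x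
  map_smul : ∀ {e : S} {a : E} (c : ℂ), IsIdempotentElem e → a ∈ 𝓑.fib e →
    ∀ x, val (c • a) x = c * val a x
  map_mul : ∀ {e f : S} {a b : E}, IsIdempotentElem e → IsIdempotentElem f →
    a ∈ 𝓑.fib e → b ∈ 𝓑.fib f → ∀ x, val (a * b) x = val a x * val b x
  map_star : ∀ {e : S} {a : E}, IsIdempotentElem e → a ∈ 𝓑.fib e →
    ∀ x, val (star a) x = conj (val a x)

variable {𝓑 : FellBundle S E}

namespace SemiAbelian

theorem commute_star_mul (h : 𝓑.SemiAbelian) {s : S} {p q r t : E} (hp : p ∈ 𝓑.fib s)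
    (hq : q ∈ 𝓑.fib s) (hr : r ∈ 𝓑.fib s) (ht : t ∈ 𝓑.fib s) :
    Commute (star p * q) (star r * t) :=
  h _ (InverseSemigroup.isIdempotentElem_star_mul_self s) _ _ (𝓑.star_mul_mem hp hq)
    (𝓑.star_mul_mem hr ht)

theorem commute_mul_star (h : 𝓑.SemiAbelian) {s : S} {p q r t : E} (hp : p ∈ 𝓑.fib s)
    (hq : q ∈ 𝓑.fib s) (hr : r ∈ 𝓑.fib s) (ht : t ∈ 𝓑.fib s) :
    Commute (p * star q) (r * star t) :=
  h _ (InverseSemigroup.isIdempotentElem_mul_self_star s) _ _ (𝓑.mul_star_mem hp hq)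
    (𝓑.mul_star_mem hr ht)

theorem star_mul_self_mul_star_mul_self [CStarRing E] (h : 𝓑.SemiAbelian) {s : S} {a b : E}
    (ha : a ∈ 𝓑.fib s) (hb : b ∈ 𝓑.fib s) :
    (star a * a) * (star b * b) = (star a * b) * (star b * a) := by
  set T := (star a * b) * (star b * a) - (star a * a) * (star b * b) with hT
  have hTb : T * (star a * b) = 0 := by
    rw [hT, sub_mul, sub_eq_zero]
    calc star a * b * (star b * a) * (star a * b)
        = star a * ((b * star b) * (a * star a)) * b := by simp only [mul_assoc]
      _ = star a * ((a * star a) * (b * star b)) * b := by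
        rw [(h.commute_mul_star hb hb ha ha).eq]
      _ = (star a * a) * ((star a * b) * (star b * b)) := by simp only [mul_assoc]
      _ = (star a * a) * (star b * b) * (star a * b) := by
        rw [(h.commute_star_mul ha hb hb hb).eq, ← mul_assoc]
  have hTa : T * (star a * a) = 0 := by
    rw [hT, sub_mul, sub_eq_zero]
    calc star a * b * (star b * a) * (star a * a)
        = (star a * b) * (star a * a) * (star b * a) := by
          rw [mul_assoc (star a * b), (h.commute_star_mul hb ha ha ha).eq, ← mul_assoc]
      _ = star a * ((b * star a) * (a * star b)) * a := by simp only [mul_assoc]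
      _ = star a * ((a * star b) * (b * star a)) * a := by
        rw [(h.commute_mul_star hb ha ha hb).eq]
      _ = (star a * a) * (star b * b) * (star a * a) := by simp only [mul_assoc]
  have hTT : star T * T = 0 := by
    have hsT : star T = T := by
      rw [hT]
      simp only [star_sub, star_mul, star_star]
      rw [(h.commute_star_mul hb hb ha ha).eq]
    rw [hsT]
    nth_rewrite 2 [hT]
    rw [mul_sub, ← mul_assoc T (star a * b), ← mul_assoc T (star a * a), hTb, hTa, zero_mul,
      zero_mul, sub_zero]
  exact (sub_eq_zero.mp ((CStarRing.star_mul_self_eq_zero_iff T).mp hTT)).symm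

end SemiAbelian

variable {X : Type*} {val : E → X → ℂ}

namespace IsIdempotentStarHom

theorem map_sub (hv : 𝓑.IsIdempotentStarHom val) {e : S} {a b : E} (he : IsIdempotentElem e)
    (ha : a ∈ 𝓑.fib e) (hb : b ∈ 𝓑.fib e) (x : X) : val (a - b) x = val a x - val b x := by
  rw [eq_sub_iff_add_eq, ← hv.map_add he (Submodule.sub_mem _ ha hb) hb, sub_add_cancel]

theorem map_star_mul_swap (hv : 𝓑.IsIdempotentStarHom val) {s : S} {c d : E}
    (hc : c ∈ 𝓑.fib s) (hd : d ∈ 𝓑.fib s) (x : X) :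
    val (star d * c) x = conj (val (star c * d) x) := by
  rw [← hv.map_star (InverseSemigroup.isIdempotentElem_star_mul_self s) (𝓑.star_mul_mem hc hd),
    star_mul, star_star]

theorem map_star_mul_mul (hv : 𝓑.IsIdempotentStarHom val) {s e : S} {a b w : E}
    (he : IsIdempotentElem e) (ha : a ∈ 𝓑.fib s) (hb : b ∈ 𝓑.fib s) (hw : w ∈ 𝓑.fib e)
    (x : X) : val (star a * (b * w)) x = val (star a * b) x * val w x := by
  rw [← mul_assoc]
  exact hv.map_mul (InverseSemigroup.isIdempotentElem_star_mul_self s) he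
    (𝓑.star_mul_mem ha hb) hw x

theorem cauchySchwarz_eq [CStarRing E] (hv : 𝓑.IsIdempotentStarHom val) (hsab : 𝓑.SemiAbelian)
    {s : S} {c d : E} (hc : c ∈ 𝓑.fib s) (hd : d ∈ 𝓑.fib s) (x : X) :
    val (star c * c) x * val (star d * d) x = val (star c * d) x * conj (val (star c * d) x) := by
  have he := InverseSemigroup.isIdempotentElem_star_mul_self s
  rw [← hv.map_mul he he (𝓑.star_mul_mem hc hc) (𝓑.star_mul_mem hd hd),
    hsab.star_mul_self_mul_star_mul_self hc hd,
    hv.map_mul he he (𝓑.star_mul_mem hc hd) (𝓑.star_mul_mem hd hc), hv.map_star_mul_swap hc hd]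

theorem map_star_mul_self_eq_zero_iff [CStarRing E] (hv : 𝓑.IsIdempotentStarHom val)
    (hsab : 𝓑.SemiAbelian) {s : S} {a d : E} {x : X} (ha : a ∈ 𝓑.fib s)
    (hα : val (star a * a) x ≠ 0) (hd : d ∈ 𝓑.fib s) :
    val (star d * d) x = 0 ↔ val (star a * d) x = 0 := by
  have hcs := hv.cauchySchwarz_eq hsab ha hd x
  rw [Complex.mul_conj] at hcs
  constructor
  · intro h
    rw [h, mul_zero, eq_comm, Complex.ofReal_eq_zero] at hcs
    exact Complex.normSq_eq_zero.mp hcs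
  · intro h
    rw [h, map_zero, Complex.ofReal_zero] at hcs
    exact (mul_eq_zero.mp hcs).resolve_left hα

theorem map_star_mul_sub_smul_eq_zero_iff [CStarRing E] (hv : 𝓑.IsIdempotentStarHom val)
    (hsab : 𝓑.SemiAbelian) {s : S} {a a' d : E} {x : X} (ha : a ∈ 𝓑.fib s)
    (hα : val (star a * a) x ≠ 0) (ha' : a' ∈ 𝓑.fib s) (hd : d ∈ 𝓑.fib s) (c : ℂ) :
    val (star (d - c • a') * (d - c • a')) x = 0 ↔
      val (star a * d) x = c * val (star a * a') x := by
  have he := InverseSemigroup.isIdempotentElem_star_mul_self s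
  have hca' : c • a' ∈ 𝓑.fib s := Submodule.smul_mem _ c ha'
  rw [hv.map_star_mul_self_eq_zero_iff hsab ha hα (Submodule.sub_mem _ hd hca'), mul_sub,
    hv.map_sub he (𝓑.star_mul_mem ha hd) (𝓑.star_mul_mem ha hca'), mul_smul_comm,
    hv.map_smul c he (𝓑.star_mul_mem ha ha'), sub_eq_zero]

end IsIdempotentStarHom

variable [CStarRing E]

theorem germRelTrip_smul_iff (hv : 𝓑.IsIdempotentStarHom val) (hsab : 𝓑.SemiAbelian)
    {s t : S} {a b : E} {x : X} {c : ℂ} (ha : a ∈ 𝓑.fib s) (hα : val (star a * a) x ≠ 0)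
    (hb : b ∈ 𝓑.fib t) :
    germRelTrip 𝓑 val (b, t, x) (c • a, s, x) ↔
      ∃ e w, IsIdempotentElem e ∧ w ∈ 𝓑.fib e ∧ val w x ≠ 0 ∧ t * e = s * e ∧
        val (star a * (b * w)) x = c * (val (star a * a) x * val w x) := by
  simp only [germRelTrip, true_and]
  refine exists₂_congr fun e w => and_congr_right fun he => and_congr_right fun hw =>
    and_congr_right fun _ => and_congr_right fun hte => ?_
  rw [smul_mul_assoc, hv.map_star_mul_sub_smul_eq_zero_iff hsab ha hα
    (𝓑.mul_mem_of_mul_eq he ha hw rfl) (𝓑.mul_mem_of_mul_eq he hb hw hte),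
    hv.map_star_mul_mul he ha ha hw]

theorem germRelTrip_smul_iff_of_mem (hv : 𝓑.IsIdempotentStarHom val) (hsab : 𝓑.SemiAbelian)
    {s : S} {a b : E} {x : X} {c : ℂ} (ha : a ∈ 𝓑.fib s) (hα : val (star a * a) x ≠ 0)
    (hb : b ∈ 𝓑.fib s) :
    germRelTrip 𝓑 val (b, s, x) (c • a, s, x) ↔ val (star a * b) x = c * val (star a * a) x := by
  rw [germRelTrip_smul_iff hv hsab ha hα hb]
  constructor
  · rintro ⟨e, w, he, hw, hwx, -, h⟩
    rw [hv.map_star_mul_mul he ha hb hw, ← mul_assoc] at h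
    exact mul_right_cancel₀ hwx h
  · intro h
    have he := InverseSemigroup.isIdempotentElem_star_mul_self s
    refine ⟨star s * s, star a * a, he, 𝓑.star_mul_mem ha ha, hα, rfl, ?_⟩
    rw [hv.map_star_mul_mul he ha hb (𝓑.star_mul_mem ha ha), h, mul_assoc]

theorem exists_germRelTrip_smul (hv : 𝓑.IsIdempotentStarHom val) (hsab : 𝓑.SemiAbelian)
    {s t e : S} {a b : E} {x : X} (ha : a ∈ 𝓑.fib s) (hα : val (star a * a) x ≠ 0)
    (hb : b ∈ 𝓑.fib t) (he : IsIdempotentElem e) (hx : x ∈ 𝓑.U val e) (hte : t * e = s * e) :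
    ∃ c : ℂ, germRelTrip 𝓑 val (b, t, x) (c • a, s, x) := by
  obtain ⟨w, hw, hwx⟩ := hx
  refine ⟨val (star a * (b * w)) x / (val (star a * a) x * val w x),
    (germRelTrip_smul_iff hv hsab ha hα hb).2 ⟨e, w, he, hw, hwx, hte, ?_⟩⟩
  rw [div_mul_cancel₀ _ (mul_ne_zero hα hwx)]

theorem eq_of_germRelTrip_smul (hv : 𝓑.IsIdempotentStarHom val) (hsab : 𝓑.SemiAbelian)
    {s t : S} {a b : E} {x : X} {c₁ c₂ : ℂ} (ha : a ∈ 𝓑.fib s) (hα : val (star a * a) x ≠ 0)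
    (hb : b ∈ 𝓑.fib t) (h₁ : germRelTrip 𝓑 val (b, t, x) (c₁ • a, s, x))
    (h₂ : germRelTrip 𝓑 val (b, t, x) (c₂ • a, s, x)) : c₁ = c₂ := by
  obtain ⟨e₁, w₁, he₁, hw₁, hw₁x, ht₁, hc₁⟩ := (germRelTrip_smul_iff hv hsab ha hα hb).1 h₁
  obtain ⟨e₂, w₂, he₂, hw₂, hw₂x, ht₂, hc₂⟩ := (germRelTrip_smul_iff hv hsab ha hα hb).1 h₂
  have witness_mul : ∀ {e w c}, IsIdempotentElem e → w ∈ 𝓑.fib e → t * e = s * e →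
      val (star a * (b * w)) x = c * (val (star a * a) x * val w x) →
      ∀ {f w'}, IsIdempotentElem f → w' ∈ 𝓑.fib f →
        val (star a * (b * (w * w'))) x = c * (val (star a * a) x * val (w * w') x) := by
    intro e w c he hw hte hc f w' hf hw'
    rw [← mul_assoc b, hv.map_star_mul_mul hf ha (𝓑.mul_mem_of_mul_eq he hb hw hte) hw', hc,
      hv.map_mul he hf hw hw', mul_assoc, mul_assoc]
  -- `(w₁ w₂) (w₂ w₁)` is a common witness, since the fibre over `e₁ e₂` is commutative
  have hcomm : (w₂ * w₁) * (w₁ * w₂) = (w₁ * w₂) * (w₂ * w₁) := by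
    have hw₂₁ : w₂ * w₁ ∈ 𝓑.fib (e₁ * e₂) :=
      (InverseSemigroup.commute_of_isIdempotentElem he₂ he₁).eq ▸ 𝓑.mul_mem hw₂ hw₁
    exact hsab _ (InverseSemigroup.isIdempotentElem_mul he₁ he₂) _ _ hw₂₁ (𝓑.mul_mem hw₁ hw₂)
  have H₁ := witness_mul he₁ hw₁ ht₁ hc₁
    (InverseSemigroup.isIdempotentElem_mul he₂ (InverseSemigroup.isIdempotentElem_mul he₂ he₁))
    (𝓑.mul_mem hw₂ (𝓑.mul_mem hw₂ hw₁))
  have H₂ := witness_mul he₂ hw₂ ht₂ hc₂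
    (InverseSemigroup.isIdempotentElem_mul he₁ (InverseSemigroup.isIdempotentElem_mul he₁ he₂))
    (𝓑.mul_mem hw₁ (𝓑.mul_mem hw₁ hw₂))
  rw [← mul_assoc w₁ w₂] at H₁
  rw [← mul_assoc w₂ w₁, hcomm] at H₂
  have hW : val ((w₁ * w₂) * (w₂ * w₁)) x ≠ 0 := by
    rw [hv.map_mul (InverseSemigroup.isIdempotentElem_mul he₁ he₂)
      (InverseSemigroup.isIdempotentElem_mul he₂ he₁) (𝓑.mul_mem hw₁ hw₂) (𝓑.mul_mem hw₂ hw₁),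
      hv.map_mul he₁ he₂ hw₁ hw₂, hv.map_mul he₂ he₁ hw₂ hw₁]
    exact mul_ne_zero (mul_ne_zero hw₁x hw₂x) (mul_ne_zero hw₂x hw₁x)
  exact mul_right_cancel₀ (mul_ne_zero hα hW) (H₁.symm.trans H₂)

theorem map_star_mul_self_eq_of_germRelTrip (hv : 𝓑.IsIdempotentStarHom val)
    (hsab : 𝓑.SemiAbelian) {s : S} {a b : E} {x : X} {c : ℂ} (ha : a ∈ 𝓑.fib s)
    (hα : val (star a * a) x ≠ 0) (hb : b ∈ 𝓑.fib s)
    (h : germRelTrip 𝓑 val (b, s, x) (c • a, s, x)) :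
    val (star b * b) x = Complex.normSq c * val (star a * a) x := by
  rw [germRelTrip_smul_iff_of_mem hv hsab ha hα hb] at h
  have hreal : conj (val (star a * a) x) = val (star a * a) x :=
    (hv.map_star_mul_swap ha ha x).symm
  refine mul_left_cancel₀ hα ?_
  rw [hv.cauchySchwarz_eq hsab ha hb, h, map_mul, hreal, ← Complex.mul_conj]
  ring

end FellBundle

theorem stmt_15_general (𝓑 : FellBundle S A) (hsab : 𝓑.SemiAbelian)
    {X : Type*} (val : A → X → ℂ)
    (hval_add : ∀ {e : S} {a b : A}, e * e = e → a ∈ 𝓑.fib e → b ∈ 𝓑.fib e →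
      ∀ x, val (a + b) x = val a x + val b x)
    (hval_smul : ∀ {e : S} {a : A} (c : ℂ), e * e = e → a ∈ 𝓑.fib e →
      ∀ x, val (c • a) x = c * val a x)
    (hval_mul : ∀ {e f : S} {a b : A}, e * e = e → f * f = f → a ∈ 𝓑.fib e → b ∈ 𝓑.fib f →
      ∀ x, val (a * b) x = val a x * val b x)
    (hval_star : ∀ {e : S} {a : A}, e * e = e → a ∈ 𝓑.fib e →
      ∀ x, val (star a) x = (starRingEnd ℂ) (val a x))
    {s : S} {x : X}
    {a : A} (ha : a ∈ 𝓑.fib s) (hapos : 0 < (val (star a * a) x).re) :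
    -- every element of the fiber over the germ `[s,x]` is a unique scalar multiple of `[a,s,x]`
    (∀ (t : S) (b : A), b ∈ 𝓑.fib t →
        (∃ e : S, e * e = e ∧ x ∈ 𝓑.U val e ∧ t * e = s * e) →
        ∃! lam : ℂ, germRelTrip 𝓑 val (b, t, x) (lam • a, s, x)) ∧
    -- the explicit formula for the scalar
    (∀ b : A, b ∈ 𝓑.fib s →
        germRelTrip 𝓑 val (b, s, x)
          ((val (star a * b) x / val (star a * a) x) • a, s, x)) ∧
    -- the scalar identification is isometric
    (∀ (b : A), b ∈ 𝓑.fib s → ∀ lam : ℂ,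
        germRelTrip 𝓑 val (b, s, x) (lam • a, s, x) →
        Real.sqrt (val (star b * b) x).re = ‖lam‖ * Real.sqrt (val (star a * a) x).re) := by
  have hv : 𝓑.IsIdempotentStarHom val := ⟨hval_add, hval_smul, hval_mul, hval_star⟩
  have hα : val (star a * a) x ≠ 0 := fun h => by simp [h] at hapos
  refine ⟨fun t b hb ⟨e, he, hx, hte⟩ => ?_, fun b hb => ?_, fun b hb c hc => ?_⟩
  · obtain ⟨c, hc⟩ := FellBundle.exists_germRelTrip_smul hv hsab ha hα hb he hx hte
    exact ⟨c, hc, fun c' hc' => FellBundle.eq_of_germRelTrip_smul hv hsab ha hα hb hc' hc⟩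
  · rw [FellBundle.germRelTrip_smul_iff_of_mem hv hsab ha hα hb, div_mul_cancel₀ _ hα]
  · rw [FellBundle.map_star_mul_self_eq_of_germRelTrip hv hsab ha hα hb hc,
      Complex.re_ofReal_mul, Real.sqrt_mul (Complex.normSq_nonneg c), ← Complex.norm_def]

/-- Let `L` be the line bundle over the groupoid of germs `𝒢` whose
fiber over `γ = [s,x]` is the set of classes `[b,t,y]` with `[t,y] = [s,x]` modulo `∼`.
For `a ∈ 𝒜ₛ` with `(a*a)(x) > 0`: every element `[b,t,x]` of the fiber `L_γ` is a unique
scalar multiple of `[a,s,x]`; explicitly, for `b ∈ 𝒜ₛ`, `[b,s,x] = λ·[a,s,x]` with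
`λ = (a*b)(x)/(a*a)(x)`.  Hence `L_γ` is one-dimensional and
`λ ↦ λ[a,s,x]/√((a*a)(x))` is an isometric isomorphism `ℂ → L_γ` (the norm of `[b,s,x]`
being `√((b*b)(x))`). -/
theorem stmt_15 (𝓑 : FellBundle S A) (hsat : 𝓑.Saturated) (hsab : 𝓑.SemiAbelian)
    {X : Type*} (val : A → X → ℂ)
    (hval_add : ∀ {e : S} {a b : A}, e * e = e → a ∈ 𝓑.fib e → b ∈ 𝓑.fib e →
      ∀ x, val (a + b) x = val a x + val b x)
    (hval_smul : ∀ {e : S} {a : A} (c : ℂ), e * e = e → a ∈ 𝓑.fib e →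
      ∀ x, val (c • a) x = c * val a x)
    (hval_mul : ∀ {e f : S} {a b : A}, e * e = e → f * f = f → a ∈ 𝓑.fib e → b ∈ 𝓑.fib f →
      ∀ x, val (a * b) x = val a x * val b x)
    (hval_star : ∀ {e : S} {a : A}, e * e = e → a ∈ 𝓑.fib e →
      ∀ x, val (star a) x = (starRingEnd ℂ) (val a x))
    (hval_inj : ∀ {e : S} {a b : A}, e * e = e → a ∈ 𝓑.fib e → b ∈ 𝓑.fib e →
      (∀ x, val a x = val b x) → a = b)
    (hval_sep : ∀ x y : X,
      (∀ (e : S) (b : A), e * e = e → b ∈ 𝓑.fib e → val b x = val b y) → x = y)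
    (hval_pos : ∀ {s : S} {a : A}, a ∈ 𝓑.fib s →
      ∀ x, (val (star a * a) x).im = 0 ∧ 0 ≤ (val (star a * a) x).re)
    {s : S} {x : X} (hx : x ∈ 𝓑.U val (star s * s))
    {a : A} (ha : a ∈ 𝓑.fib s) (hapos : 0 < (val (star a * a) x).re) :
    -- every element of the fiber over the germ `[s,x]` is a unique scalar multiple of `[a,s,x]`
    (∀ (t : S) (b : A), b ∈ 𝓑.fib t →
        (∃ e : S, e * e = e ∧ x ∈ 𝓑.U val e ∧ t * e = s * e) →
        ∃! lam : ℂ, germRelTrip 𝓑 val (b, t, x) (lam • a, s, x)) ∧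
    -- the explicit formula for the scalar
    (∀ b : A, b ∈ 𝓑.fib s →
        germRelTrip 𝓑 val (b, s, x)
          ((val (star a * b) x / val (star a * a) x) • a, s, x)) ∧
    -- the scalar identification is isometric
    (∀ (b : A), b ∈ 𝓑.fib s → ∀ lam : ℂ,
        germRelTrip 𝓑 val (b, s, x) (lam • a, s, x) →
        Real.sqrt (val (star b * b) x).re = ‖lam‖ * Real.sqrt (val (star a * a) x).re) :=
  stmt_15_general 𝓑 hsab val hval_add hval_smul hval_mul hval_star ha hapos
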